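/- Let (Ω, 𝓕, ℙ) be a probability space, let U : Ω → ℝᵐ and Z : Ω → ℝⁿ be measurable with E[‖U‖²] < ∞ and E[‖Z‖²] < ∞, and set Ū = E[U], Z̄ = E[Z]. Let Υ₁, Υ₂ be symmetric positive definite m×m real matrices and M₁, M₂ be m×n real matrices. Then E[⟨U, Υ₁U⟩] + ⟨Ū, (Υ₂ − Υ₁)Ū⟩ + 2E[⟨U, M₁Z⟩] + 2⟨Ū, (M₂ − M₁)Z̄⟩ + E[⟨Z − Z̄, M₁ᵀΥ₁⁻¹M₁(Z − Z̄)⟩] + ⟨Z̄, M₂ᵀΥ₂⁻¹M₂Z̄⟩ = E[⟨(U − Ū) + Υ₁⁻¹M₁(Z − Z̄), Υ₁((U − Ū) + Υ₁⁻¹M₁(Z − Z̄))⟩] + ⟨Ū + Υ₂⁻¹M₂Z̄, Υ₂(Ū + Υ₂⁻¹M₂Z̄)⟩. -/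

import Mathlib

/-!
Pointwise, with `S` symmetric and invertible, `(u + S⁻¹Mz)ᵀ S (u + S⁻¹Mz) = uᵀSu + 2uᵀMz + zᵀMᵀS⁻¹Mz`.
Applied to the centred pair `(U - Ubar, Z - Zbar)` with `S = Υ₁` and integrated, and to the means
`(Ubar, Zbar)` with `S = Υ₂`, this gives the right-hand side; the two sides then agree because
centring changes a bilinear expectation only by the product of the means:
`E⟨U - Ubar, B (Z - Zbar)⟩ = E⟨U, B Z⟩ - ⟨Ubar, B Zbar⟩`.
-/

open Matrix MeasureTheory

namespace Matrix

variable {ι κ : Type*} [Fintype ι] [Fintype κ]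

theorem isUnit_det_of_dotProduct_mulVec_pos {R : Type*} [Field R] [LinearOrder R]
    [IsStrictOrderedRing R] [DecidableEq ι] {S : Matrix ι ι R}
    (hS : ∀ v : ι → R, v ≠ 0 → 0 < v ⬝ᵥ (S *ᵥ v)) : IsUnit S.det := by
  refine isUnit_iff_ne_zero.mpr fun hdet => ?_
  obtain ⟨v, hv, hSv⟩ := exists_mulVec_eq_zero_iff.mpr hdet
  simpa [hSv] using hS v hv

theorem IsSymm.dotProduct_mulVec_completeSquare {R : Type*} [CommRing R] [DecidableEq ι]
    {S : Matrix ι ι R} (hS : S.IsSymm) (hdet : IsUnit S.det) (M : Matrix ι κ R)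
    (u : ι → R) (z : κ → R) :
    (u + S⁻¹ *ᵥ (M *ᵥ z)) ⬝ᵥ (S *ᵥ (u + S⁻¹ *ᵥ (M *ᵥ z)))
      = u ⬝ᵥ (S *ᵥ u) + 2 * (u ⬝ᵥ (M *ᵥ z)) + z ⬝ᵥ ((Mᵀ * S⁻¹ * M) *ᵥ z) := by
  have hcancel : S *ᵥ (S⁻¹ *ᵥ (M *ᵥ z)) = M *ᵥ z := by
    rw [mulVec_mulVec, mul_nonsing_inv S hdet, one_mulVec]
  have hcross : (S⁻¹ *ᵥ (M *ᵥ z)) ⬝ᵥ (S *ᵥ u) = u ⬝ᵥ (M *ᵥ z) := by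
    rw [dotProduct_mulVec, ← mulVec_transpose, hS.eq, dotProduct_comm, hcancel]
  have hquad : (S⁻¹ *ᵥ (M *ᵥ z)) ⬝ᵥ (M *ᵥ z) = z ⬝ᵥ ((Mᵀ * S⁻¹ * M) *ᵥ z) := by
    rw [← mulVec_mulVec, ← mulVec_mulVec, dotProduct_mulVec z, vecMul_transpose, dotProduct_comm]
  rw [mulVec_add, hcancel, add_dotProduct, dotProduct_add, dotProduct_add, hcross, hquad]
  ring

end Matrix

namespace MeasureTheory

variable {Ω ι κ : Type*} [Fintype ι] [Fintype κ] {mΩ : MeasurableSpace Ω} {μ : Measure Ω}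

theorem integrable_dotProduct_mulVec {U : Ω → ι → ℝ} {Z : Ω → κ → ℝ} (hU : MemLp U 2 μ)
    (hZ : MemLp Z 2 μ) (B : Matrix ι κ ℝ) :
    Integrable (fun ω => U ω ⬝ᵥ (B *ᵥ Z ω)) μ := by
  simp only [dotProduct, mulVec]
  refine integrable_finsetSum _ fun i _ => (hU.eval i).integrable_mul (q := 2) ?_
  exact memLp_finsetSum _ fun j _ => (hZ.eval j).const_mul (B i j)

theorem integrable_dotProduct_left {V : Ω → ι → ℝ} (hV : Integrable V μ) (c : ι → ℝ) :
    Integrable (fun ω => c ⬝ᵥ V ω) μ :=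
  integrable_finsetSum _ fun i _ => (hV.eval i).const_mul (c i)

theorem integral_dotProduct_left {V : Ω → ι → ℝ} (hV : Integrable V μ) (c : ι → ℝ) :
    ∫ ω, c ⬝ᵥ V ω ∂μ = c ⬝ᵥ ∫ ω, V ω ∂μ := by
  simp only [dotProduct]
  rw [integral_finsetSum _ fun i _ => (hV.eval i).const_mul (c i)]
  simp only [integral_const_mul, eval_integral hV.eval]

theorem integral_sub_mean_dotProduct_mulVec_sub_mean [IsProbabilityMeasure μ]
    {U : Ω → ι → ℝ} {Z : Ω → κ → ℝ} (hU : MemLp U 2 μ) (hZ : MemLp Z 2 μ)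
    (B : Matrix ι κ ℝ) :
    ∫ ω, (U ω - ∫ ω, U ω ∂μ) ⬝ᵥ (B *ᵥ (Z ω - ∫ ω, Z ω ∂μ)) ∂μ
      = ∫ ω, U ω ⬝ᵥ (B *ᵥ Z ω) ∂μ - (∫ ω, U ω ∂μ) ⬝ᵥ (B *ᵥ ∫ ω, Z ω ∂μ) := by
  set Ubar := ∫ ω, U ω ∂μ
  set Zbar := ∫ ω, Z ω ∂μ
  have iU : Integrable U μ := hU.integrable one_le_two
  have iZ : Integrable Z μ := hZ.integrable one_le_two
  have hexpand : ∀ ω, (U ω - Ubar) ⬝ᵥ (B *ᵥ (Z ω - Zbar))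
      = U ω ⬝ᵥ (B *ᵥ Z ω) - (Ubar ᵥ* B) ⬝ᵥ Z ω - (B *ᵥ Zbar) ⬝ᵥ U ω + Ubar ⬝ᵥ (B *ᵥ Zbar) := by
    intro ω
    simp only [mulVec_sub, dotProduct_sub, sub_dotProduct, dotProduct_mulVec Ubar B,
      dotProduct_comm (B *ᵥ Zbar)]
    ring
  have i₀ := integrable_dotProduct_mulVec hU hZ B
  have i₁ := integrable_dotProduct_left iZ (Ubar ᵥ* B)
  have i₂ := integrable_dotProduct_left iU (B *ᵥ Zbar)
  simp only [hexpand]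
  rw [integral_add ?_ (integrable_const _), integral_sub ?_ i₂, integral_sub i₀ i₁,
    integral_dotProduct_left iZ, integral_dotProduct_left iU, integral_const,
    probReal_univ, one_smul, ← dotProduct_mulVec, dotProduct_comm (B *ᵥ Zbar)]
  · ring
  · exact i₀.sub i₁
  · exact (i₀.sub i₁).sub i₂

end MeasureTheory

theorem meanfield_completion_of_squares_general
    {Ω : Type*} {mF : MeasurableSpace Ω} (μ : Measure Ω) [IsProbabilityMeasure μ]
    (m n : ℕ)
    (U : Ω → Fin m → ℝ) (hU : MemLp U 2 μ)
    (Z : Ω → Fin n → ℝ) (hZ : MemLp Z 2 μ)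
    (Ubar : Fin m → ℝ) (hUbar : Ubar = ∫ ω, U ω ∂μ)
    (Zbar : Fin n → ℝ) (hZbar : Zbar = ∫ ω, Z ω ∂μ)
    (Υ₁ Υ₂ : Matrix (Fin m) (Fin m) ℝ) (hΥ₁s : Υ₁.IsSymm) (hΥ₂s : Υ₂.IsSymm)
    (hΥ₁pd : ∀ v : Fin m → ℝ, v ≠ 0 → 0 < v ⬝ᵥ (Υ₁ *ᵥ v))
    (hΥ₂pd : ∀ v : Fin m → ℝ, v ≠ 0 → 0 < v ⬝ᵥ (Υ₂ *ᵥ v))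
    (M₁ M₂ : Matrix (Fin m) (Fin n) ℝ) :
    (∫ ω, (U ω) ⬝ᵥ (Υ₁ *ᵥ (U ω)) ∂μ)
      + Ubar ⬝ᵥ ((Υ₂ - Υ₁) *ᵥ Ubar)
      + 2 * ∫ ω, (U ω) ⬝ᵥ (M₁ *ᵥ (Z ω)) ∂μ
      + 2 * (Ubar ⬝ᵥ ((M₂ - M₁) *ᵥ Zbar))
      + (∫ ω, (Z ω - Zbar) ⬝ᵥ ((M₁ᵀ * Υ₁⁻¹ * M₁) *ᵥ (Z ω - Zbar)) ∂μ)
      + Zbar ⬝ᵥ ((M₂ᵀ * Υ₂⁻¹ * M₂) *ᵥ Zbar)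
    = (∫ ω, ((U ω - Ubar) + Υ₁⁻¹ *ᵥ (M₁ *ᵥ (Z ω - Zbar)))
          ⬝ᵥ (Υ₁ *ᵥ ((U ω - Ubar) + Υ₁⁻¹ *ᵥ (M₁ *ᵥ (Z ω - Zbar)))) ∂μ)
      + (Ubar + Υ₂⁻¹ *ᵥ (M₂ *ᵥ Zbar)) ⬝ᵥ (Υ₂ *ᵥ (Ubar + Υ₂⁻¹ *ᵥ (M₂ *ᵥ Zbar))) := by
  subst hUbar hZbar
  have hUc : MemLp (fun ω => U ω - ∫ ω, U ω ∂μ) 2 μ := hU.sub (memLp_const _)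
  have hZc : MemLp (fun ω => Z ω - ∫ ω, Z ω ∂μ) 2 μ := hZ.sub (memLp_const _)
  simp only [hΥ₁s.dotProduct_mulVec_completeSquare (isUnit_det_of_dotProduct_mulVec_pos hΥ₁pd),
    hΥ₂s.dotProduct_mulVec_completeSquare (isUnit_det_of_dotProduct_mulVec_pos hΥ₂pd)]
  have hquadU := integrable_dotProduct_mulVec hUc hUc Υ₁
  have hcross := (integrable_dotProduct_mulVec hUc hZc M₁).const_mul 2
  rw [integral_add ?_ (integrable_dotProduct_mulVec hZc hZc _), integral_add hquadU hcross,
    integral_const_mul, integral_sub_mean_dotProduct_mulVec_sub_mean hU hU,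
    integral_sub_mean_dotProduct_mulVec_sub_mean hU hZ]
  · simp only [sub_mulVec, dotProduct_sub]
    ring
  · exact hquadU.add hcross

/-- Mean-field completion-of-squares identity: with `Ū = E[U]`, `Z̄ = E[Z]`
and `Υ₁, Υ₂` symmetric positive definite,
`E⟨U,Υ₁U⟩ + ⟨Ū,(Υ₂−Υ₁)Ū⟩ + 2E⟨U,M₁Z⟩ + 2⟨Ū,(M₂−M₁)Z̄⟩
 + E⟨Z−Z̄, M₁ᵀΥ₁⁻¹M₁(Z−Z̄)⟩ + ⟨Z̄, M₂ᵀΥ₂⁻¹M₂Z̄⟩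
 = E⟨(U−Ū)+Υ₁⁻¹M₁(Z−Z̄), Υ₁((U−Ū)+Υ₁⁻¹M₁(Z−Z̄))⟩ + ⟨Ū+Υ₂⁻¹M₂Z̄, Υ₂(Ū+Υ₂⁻¹M₂Z̄)⟩`. -/
theorem meanfield_completion_of_squares
    {Ω : Type*} {mF : MeasurableSpace Ω} (μ : Measure Ω) [IsProbabilityMeasure μ]
    (m n : ℕ)
    (U : Ω → Fin m → ℝ) (hUmeas : Measurable U) (hU : MemLp U 2 μ)
    (Z : Ω → Fin n → ℝ) (hZmeas : Measurable Z) (hZ : MemLp Z 2 μ)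
    (Ubar : Fin m → ℝ) (hUbar : Ubar = ∫ ω, U ω ∂μ)
    (Zbar : Fin n → ℝ) (hZbar : Zbar = ∫ ω, Z ω ∂μ)
    (Υ₁ Υ₂ : Matrix (Fin m) (Fin m) ℝ) (hΥ₁s : Υ₁.IsSymm) (hΥ₂s : Υ₂.IsSymm)
    (hΥ₁pd : ∀ v : Fin m → ℝ, v ≠ 0 → 0 < v ⬝ᵥ (Υ₁ *ᵥ v))
    (hΥ₂pd : ∀ v : Fin m → ℝ, v ≠ 0 → 0 < v ⬝ᵥ (Υ₂ *ᵥ v))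
    (M₁ M₂ : Matrix (Fin m) (Fin n) ℝ) :
    (∫ ω, (U ω) ⬝ᵥ (Υ₁ *ᵥ (U ω)) ∂μ)
      + Ubar ⬝ᵥ ((Υ₂ - Υ₁) *ᵥ Ubar)
      + 2 * ∫ ω, (U ω) ⬝ᵥ (M₁ *ᵥ (Z ω)) ∂μ
      + 2 * (Ubar ⬝ᵥ ((M₂ - M₁) *ᵥ Zbar))
      + (∫ ω, (Z ω - Zbar) ⬝ᵥ ((M₁ᵀ * Υ₁⁻¹ * M₁) *ᵥ (Z ω - Zbar)) ∂μ)
      + Zbar ⬝ᵥ ((M₂ᵀ * Υ₂⁻¹ * M₂) *ᵥ Zbar)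
    = (∫ ω, ((U ω - Ubar) + Υ₁⁻¹ *ᵥ (M₁ *ᵥ (Z ω - Zbar)))
          ⬝ᵥ (Υ₁ *ᵥ ((U ω - Ubar) + Υ₁⁻¹ *ᵥ (M₁ *ᵥ (Z ω - Zbar)))) ∂μ)
      + (Ubar + Υ₂⁻¹ *ᵥ (M₂ *ᵥ Zbar)) ⬝ᵥ (Υ₂ *ᵥ (Ubar + Υ₂⁻¹ *ᵥ (M₂ *ᵥ Zbar))) :=
  meanfield_completion_of_squares_general (mF := mF) μ m n U hU Z hZ Ubar hUbar Zbar hZbar Υ₁ Υ₂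
    hΥ₁s hΥ₂s hΥ₁pd hΥ₂pd M₁ M₂
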